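/- (Non-local box correction lemma) Let a, b, λ₀, λ₁ ∈ ℝ³ with b·λ₀ ≠ 0 and b·λ₁ ≠ 0. Define bits x, y ∈ {0, 1} by x = 0 if |a·λ₁| ≤ |a·λ₀| and x = 1 otherwise, and y = 0 if sgn(b·λ₀) = sgn(b·λ₁) and y = 1 otherwise; set λ_x = λ₀ if x = 0 and λ_x = λ₁ if x = 1. Then for any bits α, β ∈ {0, 1} satisfying α ⊕ β = x ∧ y (the non-local box condition), one has sgn(b·((-1)^β λ₀)) = sgn(b·((-1)^α λ_x)). In particular Bob's output sgn(b·λ_B) with λ_B = (-1)^β λ₀ equals sgn(b·λ_s) with λ_s = (-1)^α λ_x. -/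

import Mathlib

/-! Both sides are `±sgn(b·λ₀)`, since `b·λ₀, b·λ₁ ≠ 0` makes `sgn` odd on them. If `x = 0`
the box forces `α = β`. If `x = 1`, then `sgn(b·λ₁) = (-1)^y sgn(b·λ₀)`, and the box gives
`β = α ⊕ y`, i.e. `(-1)^β = (-1)^α (-1)^y`. -/

open scoped RealInnerProductSpace

noncomputable def sgn (x : ℝ) : ℝ := if 0 ≤ x then 1 else -1

lemma sgn_neg {t : ℝ} (ht : t ≠ 0) : sgn (-t) = -sgn t := by
  unfold sgn
  rcases ht.lt_or_gt with h | h
  · simp [h.le, not_le.mpr h]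
  · simp [h.le, not_le.mpr (neg_lt_zero.mpr h)]

lemma sgn_neg_one_pow_mul {t : ℝ} (ht : t ≠ 0) (n : ℕ) :
    sgn ((-1) ^ n * t) = (-1) ^ n * sgn t := by
  rcases n.even_or_odd with hn | hn
  · simp [hn.neg_one_pow]
  · simp [hn.neg_one_pow, sgn_neg ht]

lemma sgn_inner_neg_one_pow_smul {E : Type*} [NormedAddCommGroup E] [InnerProductSpace ℝ E]
    {u v : E} (h : ⟪u, v⟫ ≠ 0) (n : ℕ) :
    sgn ⟪u, ((-1 : ℝ) ^ n) • v⟫ = (-1) ^ n * sgn ⟪u, v⟫ := by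
  rw [inner_smul_right]
  exact sgn_neg_one_pow_mul h n

lemma sgn_eq_neg_of_ne {s t : ℝ} (h : sgn s ≠ sgn t) : sgn t = -sgn s := by
  unfold sgn at *
  split_ifs at * <;> simp_all

lemma sgn_eq_neg_one_pow_mul_sgn (s t : ℝ) :
    sgn t = (-1) ^ (if sgn s = sgn t then false else true).toNat * sgn s := by
  split_ifs with h
  · simp [h]
  · simp [sgn_eq_neg_of_ne h]

lemma neg_one_pow_xor_toNat (a b : Bool) :
    (-1 : ℝ) ^ (xor a b).toNat = (-1) ^ a.toNat * (-1) ^ b.toNat := by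
  cases a <;> cases b <;> norm_num

theorem nonlocal_box_correction (b lam₀ lam₁ : EuclideanSpace ℝ (Fin 3))
    (hb₀ : ⟪b, lam₀⟫ ≠ 0) (hb₁ : ⟪b, lam₁⟫ ≠ 0)
    (x y : Bool)
    (hy : y = if sgn ⟪b, lam₀⟫ = sgn ⟪b, lam₁⟫ then false else true)
    (α β : Bool) (hbox : xor α β = (x && y)) :
    sgn ⟪b, ((-1 : ℝ) ^ β.toNat) • lam₀⟫
      = sgn ⟪b, ((-1 : ℝ) ^ α.toNat) • (if x then lam₁ else lam₀)⟫ := by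
  rw [sgn_inner_neg_one_pow_smul hb₀, sgn_inner_neg_one_pow_smul (by split <;> assumption)]
  cases x
  · obtain rfl : α = β := by simpa using hbox
    rfl
  · have hβ : β = xor α y := by
      rw [← Bool.true_and y, ← hbox, ← Bool.xor_assoc, Bool.xor_self, Bool.false_xor]
    rw [if_pos rfl, hβ, neg_one_pow_xor_toNat,
      sgn_eq_neg_one_pow_mul_sgn ⟪b, lam₀⟫ ⟪b, lam₁⟫, ← hy]
    ring
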